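/- arXiv:1902.08175 — 2 statements merged into one kernel-verified Lean document; each statement's English description precedes it below -/
import Mathlib

section
/- Pointwise Gronwall estimate for the difference of two dynamic relays (intermediate estimate in the proof of Lemma 2.3): Let k > 0, u₁, u₂ ∈ L²(0,T), ξ₁, ξ₂ ∈ [−1,1], and let y₁, y₂ be the dynamic relay solutions for (u₁, ξ₁) and (u₂, ξ₂) respectively. Then for every t ∈ [0,T], |y₁(t) − y₂(t)|² ≤ e^{t}·( |ξ₁ − ξ₂|² + k²·∫₀^t |u₁(s) − u₂(s)|² ds ). -/
/-!
Put `v = y₁ - y₂`. Testing the variational inequality of each relay with the state of the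
other gives `(y₁' - y₂') v ≤ (g(u₁) - g(u₂)) v`, and `g` is `k`-Lipschitz, so
`2 (y₁' - y₂') v ≤ k² (u₁ - u₂)² + v²` almost everywhere. Since `v` is absolutely continuous,
`v(t)² = v(0)² + 2 ∫₀ᵗ (y₁' - y₂') v`; this chain rule is obtained from Fubini's theorem
on the triangle `{r ≤ s}`. Hence `v(s)² ≤ A + ∫₀ˢ v²` for `s ≤ t`, where
`A = (ξ₁ - ξ₂)² + k² ∫₀ᵗ (u₁ - u₂)²` is frozen at the final time `t`, and Grönwall's inequality
with constant `A` gives `v(t)² ≤ eᵗ A`.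
-/

open MeasureTheory Set

/-- The function `g(u) = k·(u − ρ₂)⁺ − k·(ρ₁ − u)⁺` driving the dynamic relay. -/
noncomputable def relayG (ρ₁ ρ₂ k u : ℝ) : ℝ :=
  k * max (u - ρ₂) 0 - k * max (ρ₁ - u) 0

/-- `y` (with a.e. derivative `y'`) is a dynamic relay solution on `[0,T]` for input `u`
and initial state `ξ`: `y ∈ H¹(0,T)` (encoded by `y' ∈ L²(0,T)` together with the
fundamental-theorem-of-calculus representation), `y(0) = ξ`, `|y| ≤ 1` on `[0,T]`, and
`q(t) := g(u(t)) − y'(t)` satisfies `q(t)(z − y(t)) ≤ 0` for all `z ∈ [−1,1]`, a.e. `t`. -/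
def IsDynRelay (T ρ₁ ρ₂ k : ℝ) (u : ℝ → ℝ) (ξ : ℝ) (y y' : ℝ → ℝ) : Prop :=
  MemLp y' 2 (volume.restrict (Ioc (0:ℝ) T)) ∧
  y 0 = ξ ∧
  (∀ t ∈ Icc (0:ℝ) T, y t = ξ + ∫ s in (0:ℝ)..t, y' s) ∧
  (∀ t ∈ Icc (0:ℝ) T, |y t| ≤ 1) ∧
  (∀ᵐ t ∂(volume.restrict (Ioo (0:ℝ) T)),
    ∀ z ∈ Icc (-1:ℝ) 1, (relayG ρ₁ ρ₂ k (u t) - y' t) * (z - y t) ≤ 0)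

open Topology

theorem setIntegral_prod_mul_eq_integral_mul_setIntegral {α β : Type*} [MeasurableSpace α]
    [MeasurableSpace β] {μ : Measure α} {ν : Measure β} [SFinite μ] [SFinite ν]
    {f : α → ℝ} {g : β → ℝ} (hf : Integrable f μ) (hg : Integrable g ν)
    {S : Set (α × β)} (hS : MeasurableSet S) :
    ∫ p in S, f p.1 * g p.2 ∂μ.prod ν = ∫ x, f x * ∫ y in Prod.mk x ⁻¹' S, g y ∂ν ∂μ := by
  rw [← integral_indicator hS, integral_prod _ ((hf.mul_prod hg).indicator hS)]
  congr 1 with x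
  rw [← integral_const_mul, ← integral_indicator (measurable_prodMk_left hS)]
  rfl

theorem sq_integral_eq_two_mul_integral_mul_integral_Iic {μ : Measure ℝ} [SFinite μ]
    [NullSingletonClass μ] {f : ℝ → ℝ} (hf : Integrable f μ) :
    (∫ s, f s ∂μ) ^ 2 = 2 * ∫ s, f s * ∫ r in Iic s, f r ∂μ ∂μ := by
  have hlt : MeasurableSet {p : ℝ × ℝ | p.1 < p.2} :=
    measurableSet_lt measurable_fst measurable_snd
  have hswap : ∫ p in {p : ℝ × ℝ | p.1 < p.2}, f p.1 * f p.2 ∂μ.prod μ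
      = ∫ p in {p : ℝ × ℝ | p.2 < p.1}, f p.1 * f p.2 ∂μ.prod μ := by
    rw [← (Measure.measurePreserving_swap (μ := μ) (ν := μ)).setIntegral_preimage_emb
      MeasurableEquiv.prodComm.measurableEmbedding]
    simp only [Prod.fst_swap, Prod.snd_swap, mul_comm]
    rfl
  have hIic (x : ℝ) : Prod.mk x ⁻¹' {p : ℝ × ℝ | p.1 < p.2}ᶜ = Iic x := by ext; simp
  have hIio (x : ℝ) : Prod.mk x ⁻¹' {p : ℝ × ℝ | p.2 < p.1} = Iio x := rfl
  rw [sq, ← integral_prod_mul, ← integral_add_compl hlt.compl (hf.mul_prod hf), compl_compl,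
    hswap, setIntegral_prod_mul_eq_integral_mul_setIntegral hf hf hlt.compl,
    setIntegral_prod_mul_eq_integral_mul_setIntegral hf hf
      (measurableSet_lt measurable_snd measurable_fst)]
  simp only [hIic, hIio, ← integral_Iic_eq_integral_Iio]
  ring

theorem sq_intervalIntegral_eq_two_mul_integral_mul_primitive {f : ℝ → ℝ} {a b : ℝ}
    (hab : a ≤ b) (hf : IntegrableOn f (Ioc a b)) :
    (∫ s in a..b, f s) ^ 2 = 2 * ∫ s in a..b, f s * ∫ r in a..s, f r := by
  simp only [intervalIntegral.integral_of_le hab]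
  rw [sq_integral_eq_two_mul_integral_mul_integral_Iic hf]
  congr 1
  refine setIntegral_congr_fun measurableSet_Ioc fun s hs => ?_
  rw [intervalIntegral.integral_of_le hs.1.le, Measure.restrict_restrict measurableSet_Iic,
    inter_comm, Ioc_inter_Iic, min_eq_right hs.2]

theorem MeasureTheory.IntegrableOn.intervalIntegrable_of_Icc {f : ℝ → ℝ} {a b : ℝ} (hab : a ≤ b)
    (hf : IntegrableOn f (Icc a b)) : IntervalIntegrable f volume a b :=
  (intervalIntegrable_iff_integrableOn_Icc_of_le hab).2 hf

theorem continuousOn_intervalIntegral_of_integrableOn_Icc {f : ℝ → ℝ} {a b : ℝ}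
    (hf : IntegrableOn f (Icc a b)) : ContinuousOn (fun x => ∫ r in a..x, f r) (Icc a b) :=
  (intervalIntegral.continuousOn_primitive hf).congr fun _ hx =>
    intervalIntegral.integral_of_le hx.1

theorem sq_eq_sq_add_two_mul_integral_mul {v f : ℝ → ℝ} {a b : ℝ} (hab : a ≤ b)
    (hf : IntegrableOn f (Icc a b)) (hv : ∀ s ∈ Icc a b, v s = v a + ∫ r in a..s, f r) :
    v b ^ 2 = v a ^ 2 + 2 * ∫ s in a..b, f s * v s := by
  have hfF : IntervalIntegrable (fun s => f s * ∫ r in a..s, f r) volume a b :=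
    (hf.mul_continuousOn (continuousOn_intervalIntegral_of_integrableOn_Icc hf)
      isCompact_Icc).intervalIntegrable_of_Icc hab
  have hfv : ∫ s in a..b, f s * v s
      = v a * (∫ s in a..b, f s) + ∫ s in a..b, f s * ∫ r in a..s, f r := by
    rw [← intervalIntegral.integral_const_mul, ← intervalIntegral.integral_add
      ((hf.intervalIntegrable_of_Icc hab).const_mul _) hfF]
    refine intervalIntegral.integral_congr fun s hs => ?_
    rw [uIcc_of_le hab] at hs
    simp only [hv s hs]
    ring
  rw [hv b ⟨hab, le_rfl⟩, hfv, add_sq,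
    sq_intervalIntegral_eq_two_mul_integral_mul_primitive hab (hf.mono_set Ioc_subset_Icc_self)]
  ring

theorem le_exp_mul_of_le_add_integral {w : ℝ → ℝ} {A t : ℝ} (ht : 0 ≤ t)
    (hw : ContinuousOn w (Icc 0 t)) (h : ∀ s ∈ Icc 0 t, w s ≤ A + ∫ r in 0..s, w r) :
    w t ≤ Real.exp t * A := by
  have hB : ∀ x ∈ Ico 0 t, HasDerivWithinAt (fun s => ∫ r in 0..s, w r) (w x) (Ici x) x := by
    intro x hx
    have hIcc : Icc 0 t ∈ 𝓝[>] x := Icc_mem_nhdsGT_of_mem hx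
    exact intervalIntegral.integral_hasDerivWithinAt_right
      ((hw.mono (Icc_subset_Icc_right hx.2.le)).intervalIntegrable_of_Icc hx.1)
      ((hw.stronglyMeasurableAtFilter_nhdsWithin measurableSet_Icc x).filter_mono
        (nhdsWithin_le_of_mem hIcc))
      ((hw x (Ico_subset_Icc_self hx)).mono_of_mem_nhdsWithin hIcc)
  have hgron := le_gronwallBound_of_liminf_deriv_right_le (K := 1) (ε := A)
    (continuousOn_intervalIntegral_of_integrableOn_Icc hw.integrableOn_Icc)
    (fun x hx _ hr => (hB x hx).liminf_right_slope_le hr) intervalIntegral.integral_same.le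
    (fun x hx => (h x (Ico_subset_Icc_self hx)).trans_eq (by ring)) t ⟨ht, le_rfl⟩
  rw [gronwallBound_of_K_ne_0 one_ne_zero] at hgron
  simp only [zero_mul, one_mul, div_one, sub_zero, zero_add] at hgron
  linarith [h t ⟨ht, le_rfl⟩]

theorem abs_relayG_sub_relayG_le {ρ₁ ρ₂ k : ℝ} (hρ : ρ₁ ≤ ρ₂) (hk : 0 ≤ k) (a b : ℝ) :
    |relayG ρ₁ ρ₂ k a - relayG ρ₁ ρ₂ k b| ≤ k * |a - b| := by
  unfold relayG
  rcases le_total (a - ρ₂) 0 with h1 | h1 <;> rcases le_total (b - ρ₂) 0 with h2 | h2 <;>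
    rcases le_total (ρ₁ - a) 0 with h3 | h3 <;> rcases le_total (ρ₁ - b) 0 with h4 | h4 <;>
    rcases abs_cases (a - b) with ⟨hab, _⟩ | ⟨hab, _⟩ <;>
    simp only [max_eq_left, max_eq_right, h1, h2, h3, h4] <;>
    rw [abs_le] <;> constructor <;> nlinarith

theorem sub_mul_sub_nonneg_of_forall_mul_sub_nonpos {K : Set ℝ} {q₁ q₂ y₁ y₂ : ℝ}
    (hy₁ : y₁ ∈ K) (hy₂ : y₂ ∈ K) (h₁ : ∀ z ∈ K, q₁ * (z - y₁) ≤ 0)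
    (h₂ : ∀ z ∈ K, q₂ * (z - y₂) ≤ 0) : 0 ≤ (q₁ - q₂) * (y₁ - y₂) := by
  nlinarith [h₁ y₂ hy₂, h₂ y₁ hy₁]

theorem two_mul_sub_mul_sub_le_of_relayG {K : Set ℝ} {ρ₁ ρ₂ k u₁ u₂ y₁ y₂ p₁ p₂ : ℝ}
    (hρ : ρ₁ ≤ ρ₂) (hk : 0 ≤ k) (hy₁ : y₁ ∈ K) (hy₂ : y₂ ∈ K)
    (h₁ : ∀ z ∈ K, (relayG ρ₁ ρ₂ k u₁ - p₁) * (z - y₁) ≤ 0)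
    (h₂ : ∀ z ∈ K, (relayG ρ₁ ρ₂ k u₂ - p₂) * (z - y₂) ≤ 0) :
    2 * ((p₁ - p₂) * (y₁ - y₂)) ≤ k ^ 2 * (u₁ - u₂) ^ 2 + (y₁ - y₂) ^ 2 := by
  have hmono := sub_mul_sub_nonneg_of_forall_mul_sub_nonpos hy₁ hy₂ h₁ h₂
  have hlip : (relayG ρ₁ ρ₂ k u₁ - relayG ρ₁ ρ₂ k u₂) * (y₁ - y₂) ≤ k * |u₁ - u₂| * |y₁ - y₂| :=
    (le_abs_self _).trans <| (abs_mul _ _).trans_le <|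
      mul_le_mul_of_nonneg_right (abs_relayG_sub_relayG_le hρ hk u₁ u₂) (abs_nonneg _)
  have hamgm := two_mul_le_add_sq (k * |u₁ - u₂|) |y₁ - y₂|
  rw [mul_pow, sq_abs, sq_abs] at hamgm
  linarith

namespace IsDynRelay

variable {T ρ₁ ρ₂ k ξ ξ₁ ξ₂ : ℝ} {u u₁ u₂ y y' y₁ y₁' y₂ y₂' : ℝ → ℝ}

theorem integrableOn_deriv (h : IsDynRelay T ρ₁ ρ₂ k u ξ y y') : IntegrableOn y' (Icc 0 T) :=
  (integrableOn_Icc_iff_integrableOn_Ioc (by simp)).2 (h.1.integrable one_le_two)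

theorem continuousOn (h : IsDynRelay T ρ₁ ρ₂ k u ξ y y') : ContinuousOn y (Icc 0 T) :=
  (continuousOn_const.add (continuousOn_intervalIntegral_of_integrableOn_Icc
    h.integrableOn_deriv)).congr h.2.2.1

theorem ae_two_mul_deriv_sub_mul_sub_le (h₁ : IsDynRelay T ρ₁ ρ₂ k u₁ ξ₁ y₁ y₁')
    (h₂ : IsDynRelay T ρ₁ ρ₂ k u₂ ξ₂ y₂ y₂') (hρ : ρ₁ ≤ ρ₂) (hk : 0 ≤ k) :
    ∀ᵐ s ∂volume.restrict (Icc 0 T),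
      2 * ((y₁' s - y₂' s) * (y₁ s - y₂ s)) ≤ k ^ 2 * (u₁ s - u₂ s) ^ 2 + (y₁ s - y₂ s) ^ 2 := by
  rw [← Measure.restrict_congr_set Ioo_ae_eq_Icc]
  filter_upwards [h₁.2.2.2.2, h₂.2.2.2.2, ae_restrict_mem measurableSet_Ioo] with s hs₁ hs₂ hs
  exact two_mul_sub_mul_sub_le_of_relayG hρ hk
    (abs_le.1 (h₁.2.2.2.1 s (Ioo_subset_Icc_self hs)))
    (abs_le.1 (h₂.2.2.2.1 s (Ioo_subset_Icc_self hs))) hs₁ hs₂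

theorem sq_sub_le (h₁ : IsDynRelay T ρ₁ ρ₂ k u₁ ξ₁ y₁ y₁')
    (h₂ : IsDynRelay T ρ₁ ρ₂ k u₂ ξ₂ y₂ y₂') (hρ : ρ₁ ≤ ρ₂) (hk : 0 ≤ k)
    (hu : IntegrableOn (fun s => (u₁ s - u₂ s) ^ 2) (Icc 0 T)) {t : ℝ} (ht : t ∈ Icc 0 T) :
    (y₁ t - y₂ t) ^ 2 ≤ (ξ₁ - ξ₂) ^ 2 +
      (k ^ 2 * ∫ s in 0..t, (u₁ s - u₂ s) ^ 2) + ∫ s in 0..t, (y₁ s - y₂ s) ^ 2 := by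
  have hsub : Icc 0 t ⊆ Icc 0 T := Icc_subset_Icc_right ht.2
  have hdy' : IntegrableOn (fun s => y₁' s - y₂' s) (Icc 0 t) :=
    (h₁.integrableOn_deriv.sub h₂.integrableOn_deriv).mono_set hsub
  have hdy : ContinuousOn (fun s => y₁ s - y₂ s) (Icc 0 t) :=
    (h₁.continuousOn.sub h₂.continuousOn).mono hsub
  have hv : ∀ s ∈ Icc 0 t, y₁ s - y₂ s = (y₁ 0 - y₂ 0) + ∫ r in 0..s, (y₁' r - y₂' r) := by
    intro s hs
    have hsT : Icc 0 s ⊆ Icc 0 T := Icc_subset_Icc_right (hs.2.trans ht.2)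
    rw [h₁.2.2.1 s (hsub hs), h₂.2.2.1 s (hsub hs), h₁.2.1, h₂.2.1, intervalIntegral.integral_sub
      ((h₁.integrableOn_deriv.mono_set hsT).intervalIntegrable_of_Icc hs.1)
      ((h₂.integrableOn_deriv.mono_set hsT).intervalIntegrable_of_Icc hs.1)]
    ring
  have hu' : IntervalIntegrable (fun s => k ^ 2 * (u₁ s - u₂ s) ^ 2) volume 0 t :=
    ((hu.mono_set hsub).intervalIntegrable_of_Icc ht.1).const_mul _
  have hdy2 : IntervalIntegrable (fun s => (y₁ s - y₂ s) ^ 2) volume 0 t :=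
    (hdy.pow 2).intervalIntegrable_of_Icc ht.1
  rw [sq_eq_sq_add_two_mul_integral_mul ht.1 hdy' hv, h₁.2.1, h₂.2.1,
    ← intervalIntegral.integral_const_mul, ← intervalIntegral.integral_const_mul,
    add_assoc, ← intervalIntegral.integral_add hu' hdy2]
  gcongr
  exact intervalIntegral.integral_mono_ae_restrict ht.1
    (((hdy'.mul_continuousOn hdy isCompact_Icc).intervalIntegrable_of_Icc ht.1).const_mul 2)
    (hu'.add hdy2)
    (ae_restrict_of_ae_restrict_of_subset hsub (ae_two_mul_deriv_sub_mul_sub_le h₁ h₂ hρ hk))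

end IsDynRelay

theorem dyn_relay_gronwall_estimate_general (T ρ₁ ρ₂ k : ℝ)
    (hρ : ρ₁ < ρ₂) (hk : 0 < k)
    (u₁ u₂ : ℝ → ℝ)
    (hu₁ : MemLp u₁ 2 (volume.restrict (Ioc (0:ℝ) T)))
    (hu₂ : MemLp u₂ 2 (volume.restrict (Ioc (0:ℝ) T)))
    (ξ₁ ξ₂ : ℝ)
    (y₁ y₁' y₂ y₂' : ℝ → ℝ)
    (h₁ : IsDynRelay T ρ₁ ρ₂ k u₁ ξ₁ y₁ y₁')
    (h₂ : IsDynRelay T ρ₁ ρ₂ k u₂ ξ₂ y₂ y₂') :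
    ∀ t ∈ Icc (0:ℝ) T,
      (y₁ t - y₂ t) ^ 2 ≤ Real.exp t *
        ((ξ₁ - ξ₂) ^ 2 + k ^ 2 * ∫ s in (0:ℝ)..t, (u₁ s - u₂ s) ^ 2) := by
  intro t ht
  have hu : IntegrableOn (fun s => (u₁ s - u₂ s) ^ 2) (Icc 0 T) :=
    (integrableOn_Icc_iff_integrableOn_Ioc (by simp)).2 (hu₁.sub hu₂).integrable_sq
  refine le_exp_mul_of_le_add_integral (w := fun s => (y₁ s - y₂ s) ^ 2) ht.1
    ((h₁.continuousOn.sub h₂.continuousOn).pow 2 |>.mono (Icc_subset_Icc_right ht.2))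
    fun s hs => (h₁.sq_sub_le h₂ hρ.le hk.le hu ⟨hs.1, hs.2.trans ht.2⟩).trans ?_
  have hmono : ∫ r in 0..s, (u₁ r - u₂ r) ^ 2 ≤ ∫ r in 0..t, (u₁ r - u₂ r) ^ 2 :=
    intervalIntegral.integral_mono_interval le_rfl hs.1 hs.2 (ae_of_all _ fun _ => sq_nonneg _)
      ((hu.mono_set (Icc_subset_Icc_right ht.2)).intervalIntegrable_of_Icc ht.1)
  gcongr

/-- Pointwise Gronwall estimate for the difference of two dynamic relays
(intermediate estimate in the proof of Lemma 2.3). -/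
theorem dyn_relay_gronwall_estimate (T ρ₁ ρ₂ k : ℝ)
    (hT : 0 < T) (hρ : ρ₁ < ρ₂) (hk : 0 < k)
    (u₁ u₂ : ℝ → ℝ)
    (hu₁ : MemLp u₁ 2 (volume.restrict (Ioc (0:ℝ) T)))
    (hu₂ : MemLp u₂ 2 (volume.restrict (Ioc (0:ℝ) T)))
    (ξ₁ ξ₂ : ℝ) (hξ₁ : ξ₁ ∈ Icc (-1:ℝ) 1) (hξ₂ : ξ₂ ∈ Icc (-1:ℝ) 1)
    (y₁ y₁' y₂ y₂' : ℝ → ℝ)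
    (h₁ : IsDynRelay T ρ₁ ρ₂ k u₁ ξ₁ y₁ y₁')
    (h₂ : IsDynRelay T ρ₁ ρ₂ k u₂ ξ₂ y₂ y₂') :
    ∀ t ∈ Icc (0:ℝ) T,
      (y₁ t - y₂ t) ^ 2 ≤ Real.exp t *
        ((ξ₁ - ξ₂) ^ 2 + k ^ 2 * ∫ s in (0:ℝ)..t, (u₁ s - u₂ s) ^ 2) :=
  dyn_relay_gronwall_estimate_general T ρ₁ ρ₂ k hρ hk u₁ u₂ hu₁ hu₂ ξ₁ ξ₂ y₁ y₁' y₂ y₂' h₁ h₂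
end

section
/- Discrete monotonicity property of the relay at the final node (eq. (4.5)): Let u₁, u₂ ∈ L²(0,T) be continuous functions with u₁(t) = u₂(t) for all t ∈ [0,s], where 0 ≤ s < T, and suppose both u₁ and u₂ are affine on [s,T]. Let ξ ∈ [−1,1] and let y₁, y₂ be the dynamic relay solutions for (u₁, ξ) and (u₂, ξ). Then (y₁(T) − y₂(T))·(u₁(T) − u₂(T)) ≥ 0. -/
/-!
Since the inputs agree up to `s` and their difference is linear on `[s, T]`, the sign of
`u₁ - u₂` on all of `[0, T]` is that of `u₁ T - u₂ T`. The theorem then follows from the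
comparison principle for the dynamic relay: if `u₂ ≤ u₁` then `y₂ ≤ y₁`. For that, `g` is
monotone, so wherever `y₁ < y₂` the two variational inequalities, each tested with the other
state, give `y₂' ≤ g(u₂) ≤ g(u₁) ≤ y₁'`. Hence `y₂ - y₁`, which starts at `0`, is
nonincreasing after its last zero on `[0, T]` and so cannot be positive at `T`.
-/

open MeasureTheory Set

theorem relayG_monotone {ρ₁ ρ₂ k : ℝ} (hk : 0 ≤ k) : Monotone (relayG ρ₁ ρ₂ k) := by
  intro a b hab
  unfold relayG
  gcongr

theorem exists_last_nonpos_of_continuousOn {w : ℝ → ℝ} {a b : ℝ} (hab : a ≤ b)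
    (hw : ContinuousOn w (Icc a b)) (ha : w a ≤ 0) :
    ∃ t₀ ∈ Icc a b, w t₀ ≤ 0 ∧ ∀ t ∈ Ioc t₀ b, 0 < w t := by
  have hcompact : IsCompact (Icc a b ∩ {t | w t ≤ 0}) :=
    isCompact_Icc.of_isClosed_subset
      (hw.preimage_isClosed_of_isClosed isClosed_Icc isClosed_Iic) inter_subset_left
  obtain ⟨t₀, ⟨ht₀, hwt₀⟩, hmax⟩ := hcompact.exists_isGreatest ⟨a, ⟨le_rfl, hab⟩, ha⟩
  refine ⟨t₀, ht₀, hwt₀, fun t ht => ?_⟩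
  by_contra! hwt
  exact (hmax ⟨⟨ht₀.1.trans ht.1.le, ht.2⟩, hwt⟩).not_gt ht.1

theorem nonpos_of_eq_primitive_of_ae_nonpos_where_pos {w w' : ℝ → ℝ} {a b : ℝ} (hab : a ≤ b)
    (hint : IntegrableOn w' (Icc a b)) (hw : ∀ t ∈ Icc a b, w t = w a + ∫ s in a..t, w' s)
    (ha : w a ≤ 0) (hw' : ∀ᵐ t ∂volume.restrict (Ioo a b), 0 < w t → w' t ≤ 0) :
    w b ≤ 0 := by
  have hcont : ContinuousOn w (Icc a b) := by
    have := intervalIntegral.continuousOn_primitive_interval (a := a) (b := b)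
      (by rwa [uIcc_of_le hab])
    rw [uIcc_of_le hab] at this
    exact (continuousOn_const.add this).congr hw
  obtain ⟨t₀, ht₀, hwt₀, hpos⟩ := exists_last_nonpos_of_continuousOn hab hcont ha
  have hdiff : w b - w t₀ = ∫ s in t₀..b, w' s := by
    rw [hw b ⟨hab, le_rfl⟩, hw t₀ ht₀, add_sub_add_left_eq_sub,
      intervalIntegral.integral_interval_sub_left]
    · exact (intervalIntegrable_iff_integrableOn_Icc_of_le hab).2 hint
    · exact (intervalIntegrable_iff_integrableOn_Icc_of_le ht₀.1).2
        (hint.mono_set (Icc_subset_Icc le_rfl ht₀.2))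
  have hnonpos : ∫ s in t₀..b, w' s ≤ 0 := by
    rw [intervalIntegral.integral_of_le ht₀.2, ← Measure.restrict_congr_set Ioo_ae_eq_Ioc]
    refine integral_nonpos_of_ae ?_
    filter_upwards [ae_restrict_of_ae_restrict_of_subset (Ioo_subset_Ioo_left ht₀.1) hw',
      ae_restrict_mem measurableSet_Ioo] with t hwt ht
    exact hwt (hpos t ⟨ht.1, ht.2.le⟩)
  linarith

theorem relay_rate_le_of_lt {g₁ g₂ y₁ y₂ y₁' y₂' : ℝ} (hg : g₂ ≤ g₁)
    (hy₁ : y₁ ∈ Icc (-1 : ℝ) 1) (hy₂ : y₂ ∈ Icc (-1 : ℝ) 1)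
    (hvi₁ : ∀ z ∈ Icc (-1 : ℝ) 1, (g₁ - y₁') * (z - y₁) ≤ 0)
    (hvi₂ : ∀ z ∈ Icc (-1 : ℝ) 1, (g₂ - y₂') * (z - y₂) ≤ 0) (hlt : y₁ < y₂) :
    y₂' ≤ y₁' := by
  have h₁ : g₁ - y₁' ≤ 0 := nonpos_of_mul_nonpos_left (hvi₁ y₂ hy₂) (sub_pos.2 hlt)
  have h₂ : 0 ≤ g₂ - y₂' := nonneg_of_mul_nonpos_left (hvi₂ y₁ hy₁) (sub_neg.2 hlt)
  linarith

theorem IsDynRelay.integrableOn {T ρ₁ ρ₂ k ξ : ℝ} {u y y' : ℝ → ℝ}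
    (h : IsDynRelay T ρ₁ ρ₂ k u ξ y y') : IntegrableOn y' (Ioc 0 T) :=
  h.1.integrable one_le_two

theorem IsDynRelay.intervalIntegrable {T ρ₁ ρ₂ k ξ : ℝ} {u y y' : ℝ → ℝ}
    (h : IsDynRelay T ρ₁ ρ₂ k u ξ y y') {t : ℝ} (ht : t ∈ Icc 0 T) :
    IntervalIntegrable y' volume 0 t := by
  rw [intervalIntegrable_iff_integrableOn_Ioc_of_le ht.1]
  exact h.integrableOn.mono_set (Ioc_subset_Ioc le_rfl ht.2)

theorem IsDynRelay.le_of_le {T ρ₁ ρ₂ k ξ : ℝ} {u₁ u₂ y₁ y₁' y₂ y₂' : ℝ → ℝ}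
    (hT : 0 ≤ T) (hk : 0 ≤ k) (hu : ∀ t ∈ Icc (0 : ℝ) T, u₂ t ≤ u₁ t)
    (h₁ : IsDynRelay T ρ₁ ρ₂ k u₁ ξ y₁ y₁') (h₂ : IsDynRelay T ρ₁ ρ₂ k u₂ ξ y₂ y₂') :
    y₂ T ≤ y₁ T := by
  rw [← sub_nonpos]
  refine nonpos_of_eq_primitive_of_ae_nonpos_where_pos (w := fun t => y₂ t - y₁ t)
    (w' := fun t => y₂' t - y₁' t) hT ?_ (fun t ht => ?_) (by simp [h₁.2.1, h₂.2.1]) ?_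
  · rw [integrableOn_Icc_iff_integrableOn_Ioc]
    exact h₂.integrableOn.sub h₁.integrableOn
  · simp only [h₁.2.1, h₂.2.1, sub_self, zero_add,
      intervalIntegral.integral_sub (h₂.intervalIntegrable ht) (h₁.intervalIntegrable ht)]
    rw [h₁.2.2.1 t ht, h₂.2.2.1 t ht]
    ring
  · filter_upwards [h₁.2.2.2.2, h₂.2.2.2.2, ae_restrict_mem measurableSet_Ioo]
      with t hvi₁ hvi₂ ht hpos
    have htIcc : t ∈ Icc 0 T := Ioo_subset_Icc_self ht
    have := relay_rate_le_of_lt (relayG_monotone hk (hu t htIcc))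
      (abs_le.1 (h₁.2.2.2.1 t htIcc)) (abs_le.1 (h₂.2.2.2.1 t htIcc)) hvi₁ hvi₂ (sub_pos.1 hpos)
    linarith

theorem le_on_Icc_of_eqOn_of_affine {u₁ u₂ : ℝ → ℝ} {s T : ℝ} (hs : 0 ≤ s)
    (heq : ∀ t ∈ Icc (0 : ℝ) s, u₁ t = u₂ t)
    (haff₁ : ∃ a b : ℝ, ∀ t ∈ Icc s T, u₁ t = a * t + b)
    (haff₂ : ∃ a b : ℝ, ∀ t ∈ Icc s T, u₂ t = a * t + b) (hT : u₂ T ≤ u₁ T) :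
    ∀ t ∈ Icc (0 : ℝ) T, u₂ t ≤ u₁ t := by
  obtain ⟨a₁, b₁, h₁⟩ := haff₁
  obtain ⟨a₂, b₂, h₂⟩ := haff₂
  intro t ht
  rcases le_or_gt t s with hts | hst
  · exact (heq t ⟨ht.1, hts⟩).ge
  have hsT : s ≤ T := hst.le.trans ht.2
  have hs_eq : a₁ * s + b₁ = a₂ * s + b₂ := by
    rw [← h₁ s ⟨le_rfl, hsT⟩, ← h₂ s ⟨le_rfl, hsT⟩, heq s ⟨hs, le_rfl⟩]
  have hdiff : ∀ r ∈ Icc s T, u₁ r - u₂ r = (a₁ - a₂) * (r - s) := fun r hr => by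
    rw [h₁ r hr, h₂ r hr]; linear_combination hs_eq
  have hT' := hdiff T ⟨hsT, le_rfl⟩
  have ht' := hdiff t ⟨hst.le, ht.2⟩
  have hslope : 0 ≤ a₁ - a₂ :=
    nonneg_of_mul_nonneg_left (hT' ▸ sub_nonneg.2 hT) (by linarith [ht.2])
  nlinarith

theorem dyn_relay_final_node_monotonicity_general (T ρ₁ ρ₂ k : ℝ)
    (hT : 0 < T) (hk : 0 < k)
    (s : ℝ) (hs0 : 0 ≤ s)
    (u₁ u₂ : ℝ → ℝ)
    (heq : ∀ t ∈ Icc (0:ℝ) s, u₁ t = u₂ t)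
    (haff₁ : ∃ a b : ℝ, ∀ t ∈ Icc s T, u₁ t = a * t + b)
    (haff₂ : ∃ a b : ℝ, ∀ t ∈ Icc s T, u₂ t = a * t + b)
    (ξ : ℝ)
    (y₁ y₁' y₂ y₂' : ℝ → ℝ)
    (h₁ : IsDynRelay T ρ₁ ρ₂ k u₁ ξ y₁ y₁')
    (h₂ : IsDynRelay T ρ₁ ρ₂ k u₂ ξ y₂ y₂') :
    0 ≤ (y₁ T - y₂ T) * (u₁ T - u₂ T) := by
  rcases le_total (u₂ T) (u₁ T) with hu | hu
  · have hy := h₁.le_of_le hT.le hk.le (le_on_Icc_of_eqOn_of_affine hs0 heq haff₁ haff₂ hu) h₂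
    exact mul_nonneg (sub_nonneg.2 hy) (sub_nonneg.2 hu)
  · have hy := h₂.le_of_le hT.le hk.le
      (le_on_Icc_of_eqOn_of_affine hs0 (fun t ht => (heq t ht).symm) haff₂ haff₁ hu) h₁
    exact mul_nonneg_of_nonpos_of_nonpos (sub_nonpos.2 hy) (sub_nonpos.2 hu)

/-- Discrete monotonicity property of the relay at the final node (eq. (4.5)):
if two continuous inputs coincide on `[0,s]` and are affine on `[s,T]`, then the
relay outputs at `T` are ordered like the inputs at `T`. -/
theorem dyn_relay_final_node_monotonicity (T ρ₁ ρ₂ k : ℝ)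
    (hT : 0 < T) (hρ : ρ₁ < ρ₂) (hk : 0 < k)
    (s : ℝ) (hs0 : 0 ≤ s) (hsT : s < T)
    (u₁ u₂ : ℝ → ℝ)
    (hc₁ : ContinuousOn u₁ (Icc (0:ℝ) T)) (hc₂ : ContinuousOn u₂ (Icc (0:ℝ) T))
    (hu₁ : MemLp u₁ 2 (volume.restrict (Ioc (0:ℝ) T)))
    (hu₂ : MemLp u₂ 2 (volume.restrict (Ioc (0:ℝ) T)))
    (heq : ∀ t ∈ Icc (0:ℝ) s, u₁ t = u₂ t)
    (haff₁ : ∃ a b : ℝ, ∀ t ∈ Icc s T, u₁ t = a * t + b)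
    (haff₂ : ∃ a b : ℝ, ∀ t ∈ Icc s T, u₂ t = a * t + b)
    (ξ : ℝ) (hξ : ξ ∈ Icc (-1:ℝ) 1)
    (y₁ y₁' y₂ y₂' : ℝ → ℝ)
    (h₁ : IsDynRelay T ρ₁ ρ₂ k u₁ ξ y₁ y₁')
    (h₂ : IsDynRelay T ρ₁ ρ₂ k u₂ ξ y₂ y₂') :
    0 ≤ (y₁ T - y₂ T) * (u₁ T - u₂ T) :=
  dyn_relay_final_node_monotonicity_general T ρ₁ ρ₂ k hT hk s hs0 u₁ u₂ heq haff₁ haff₂ ξ y₁ y₁' y₂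
    y₂' h₁ h₂
end
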